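/- Let λ : TG → GT be an entwining from a monad T = (T, m, e) to a comonad G = (G, δ, ε) on a category A, and let Ĝ be the lifting of G to A_T. Then the assignment K' ↦ U_T(β_{K'}), where β_{K'} : φ_T → Ĝφ_T is the left Ĝ-comodule structure on φ_T corresponding to K', yields a bijection between (i) functors K' : A → (A_T)^{Ĝ} satisfying U^{Ĝ} ∘ K' = φ_T, and (ii) left G-comodule structures β : T → GT on the functor T (i.e., εT ∘ β = id and δT ∘ β = Gβ ∘ β) satisfying β ∘ m = Gm ∘ λT ∘ Tβ. -/

import Mathlib

/-!
For any comonad `H` on `C` and functor `P : D ⥤ C`, lifts of `P` through the forgetful functor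
`H.Coalgebra ⥤ C` are the same thing as natural transformations `P ⟶ HP` satisfying the counit
and coassociativity laws. Apply this to `Ĝ` and `φ_T`. Since `U_T` is faithful and `Ĝ, δ̂, ε̂`
lie over `G, δ, ε`, such a transformation is determined by its underlying `β : T ⟶ GT`, its
comodule laws are those of `β`, and a family `β_a` consists of `T`-algebra maps
`φ_T a ⟶ Ĝ φ_T a` exactly when `β ∘ m = Gm ∘ λT ∘ Tβ`.
-/

open CategoryTheory CategoryTheory.Limits

namespace Paper


variable {A : Type*} [Category A]

/-- An entwining (mixed distributive law) `λ : TG ⟶ GT` from a monad `T` to a comonad `G`. -/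
structure Entwining (T : Monad A) (G : Comonad A) where
  lam : (G : A ⥤ A) ⋙ (T : A ⥤ A) ⟶ (T : A ⥤ A) ⋙ (G : A ⥤ A)
  comp_mul : ∀ a : A, T.μ.app ((G : A ⥤ A).obj a) ≫ lam.app a =
      (T : A ⥤ A).map (lam.app a) ≫ lam.app ((T : A ⥤ A).obj a) ≫
        (G : A ⥤ A).map (T.μ.app a)
  comp_unit : ∀ a : A, T.η.app ((G : A ⥤ A).obj a) ≫ lam.app a = (G : A ⥤ A).map (T.η.app a)
  delta_comp : ∀ a : A, lam.app a ≫ G.δ.app ((T : A ⥤ A).obj a) =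
      (T : A ⥤ A).map (G.δ.app a) ≫ lam.app ((G : A ⥤ A).obj a) ≫
        (G : A ⥤ A).map (lam.app a)
  eps_comp : ∀ a : A, lam.app a ≫ G.ε.app ((T : A ⥤ A).obj a) = (T : A ⥤ A).map (G.ε.app a)

namespace Entwining

variable {T : Monad A} {G : Comonad A} (E : Entwining T G)

lemma lam_natural {a b : A} (f : a ⟶ b) :
    (T : A ⥤ A).map ((G : A ⥤ A).map f) ≫ E.lam.app b =
      E.lam.app a ≫ (G : A ⥤ A).map ((T : A ⥤ A).map f) :=
  E.lam.naturality f

/-- The value of the lifted comonad `Ĝ` on an object of `A_T`: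
`Ĝ(a, h) = (G(a), G(h) ∘ λ_a)`. -/
@[simps]
def liftAlgebra (X : T.Algebra) : T.Algebra where
  A := (G : A ⥤ A).obj X.A
  a := E.lam.app X.A ≫ (G : A ⥤ A).map X.a
  unit := by
    rw [← Category.assoc, E.comp_unit, ← Functor.map_comp, X.unit]
    simp
  assoc := by
    calc T.μ.app ((G : A ⥤ A).obj X.A) ≫ E.lam.app X.A ≫ (G : A ⥤ A).map X.a
        = (T.μ.app ((G : A ⥤ A).obj X.A) ≫ E.lam.app X.A) ≫ (G : A ⥤ A).map X.a := by
          rw [Category.assoc]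
      _ = (T : A ⥤ A).map (E.lam.app X.A) ≫ E.lam.app ((T : A ⥤ A).obj X.A) ≫
            (G : A ⥤ A).map (T.μ.app X.A) ≫ (G : A ⥤ A).map X.a := by
          rw [E.comp_mul]; simp [Category.assoc]
      _ = (T : A ⥤ A).map (E.lam.app X.A) ≫ E.lam.app ((T : A ⥤ A).obj X.A) ≫
            (G : A ⥤ A).map ((T : A ⥤ A).map X.a) ≫ (G : A ⥤ A).map X.a := by
          rw [← Functor.map_comp, X.assoc, Functor.map_comp]
      _ = (T : A ⥤ A).map (E.lam.app X.A) ≫ (T : A ⥤ A).map ((G : A ⥤ A).map X.a) ≫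
            E.lam.app X.A ≫ (G : A ⥤ A).map X.a := by
          rw [← Category.assoc (E.lam.app ((T : A ⥤ A).obj X.A)), ← E.lam_natural X.a]
          simp [Category.assoc]
      _ = (T : A ⥤ A).map (E.lam.app X.A ≫ (G : A ⥤ A).map X.a) ≫
            E.lam.app X.A ≫ (G : A ⥤ A).map X.a := by
          rw [Functor.map_comp, Category.assoc]

/-- The lifting `Ĝ` of the comonad `G` to the Eilenberg–Moore category `A_T`
along the entwining `λ`. -/
@[simps]
def liftedComonad : Comonad (T.Algebra) where
  obj X := E.liftAlgebra X
  map {X Y} f :=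
    { f := (G : A ⥤ A).map f.f
      h := by
        calc (T : A ⥤ A).map ((G : A ⥤ A).map f.f) ≫ E.lam.app Y.A ≫ (G : A ⥤ A).map Y.a
            = (E.lam.app X.A ≫ (G : A ⥤ A).map ((T : A ⥤ A).map f.f)) ≫
                (G : A ⥤ A).map Y.a := by
              rw [← Category.assoc, E.lam_natural f.f]
          _ = E.lam.app X.A ≫ (G : A ⥤ A).map ((T : A ⥤ A).map f.f ≫ Y.a) := by
              rw [Category.assoc, ← Functor.map_comp]
          _ = E.lam.app X.A ≫ (G : A ⥤ A).map (X.a ≫ f.f) := by rw [f.h]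
          _ = (E.lam.app X.A ≫ (G : A ⥤ A).map X.a) ≫ (G : A ⥤ A).map f.f := by
              rw [Functor.map_comp, Category.assoc] }
  map_id X := by ext; exact (G : A ⥤ A).map_id X.A
  map_comp f g := by ext; exact (G : A ⥤ A).map_comp f.f g.f
  ε :=
    { app := fun X =>
        { f := G.ε.app X.A
          h := by
            dsimp
            show (T : A ⥤ A).map (G.ε.app X.A) ≫ X.a = (E.lam.app X.A ≫ (G : A ⥤ A).map X.a) ≫ G.ε.app X.A
            have hnat : (G : A ⥤ A).map X.a ≫ G.ε.app X.A =
                G.ε.app ((T : A ⥤ A).obj X.A) ≫ X.a := by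
              simpa using (G.ε.naturality X.a).symm
            rw [Category.assoc, hnat, ← Category.assoc, E.eps_comp] }
      naturality := fun X Y f => by ext; exact G.ε.naturality f.f }
  δ :=
    { app := fun X =>
        { f := G.δ.app X.A
          h := by
            dsimp
            calc (T : A ⥤ A).map (G.δ.app X.A) ≫ E.lam.app ((G : A ⥤ A).obj X.A) ≫
                  (G : A ⥤ A).map (E.lam.app X.A ≫ (G : A ⥤ A).map X.a)
                = (T : A ⥤ A).map (G.δ.app X.A) ≫ E.lam.app ((G : A ⥤ A).obj X.A) ≫
                    (G : A ⥤ A).map (E.lam.app X.A) ≫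
                    (G : A ⥤ A).map ((G : A ⥤ A).map X.a) := by
                  rw [Functor.map_comp]
              _ = (E.lam.app X.A ≫ G.δ.app ((T : A ⥤ A).obj X.A)) ≫
                    (G : A ⥤ A).map ((G : A ⥤ A).map X.a) := by
                  rw [E.delta_comp]; simp [Category.assoc]
              _ = E.lam.app X.A ≫ (G : A ⥤ A).map X.a ≫ G.δ.app X.A := by
                  have hnat : (G : A ⥤ A).map X.a ≫ G.δ.app X.A =
                      G.δ.app ((T : A ⥤ A).obj X.A) ≫
                        (G : A ⥤ A).map ((G : A ⥤ A).map X.a) := by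
                    simpa using (G.δ.naturality X.a).symm
                  rw [hnat, Category.assoc]
              _ = (E.lam.app X.A ≫ (G : A ⥤ A).map X.a) ≫ G.δ.app X.A := by
                  rw [Category.assoc] }
      naturality := fun X Y f => by ext; exact G.δ.naturality f.f }
  coassoc X := by ext; exact G.coassoc X.A
  left_counit X := by ext; exact G.left_counit X.A
  right_counit X := by ext; exact G.right_counit X.A


/-- The value of the lifted monad `T̂` on an object of `A^G`: `T̂(a, θ) = (T(a), λ_a ∘ T(θ))`. -/
@[simps]
def liftCoalgebra (X : G.Coalgebra) : G.Coalgebra where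
  A := (T : A ⥤ A).obj X.A
  a := (T : A ⥤ A).map X.a ≫ E.lam.app X.A
  counit := by
    rw [Category.assoc, E.eps_comp, ← Functor.map_comp, X.counit]
    simp
  coassoc := by
    calc ((T : A ⥤ A).map X.a ≫ E.lam.app X.A) ≫ G.δ.app ((T : A ⥤ A).obj X.A)
        = (T : A ⥤ A).map X.a ≫ (T : A ⥤ A).map (G.δ.app X.A) ≫
            E.lam.app ((G : A ⥤ A).obj X.A) ≫ (G : A ⥤ A).map (E.lam.app X.A) := by
          rw [Category.assoc, E.delta_comp]
      _ = (T : A ⥤ A).map (X.a ≫ G.δ.app X.A) ≫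
            E.lam.app ((G : A ⥤ A).obj X.A) ≫ (G : A ⥤ A).map (E.lam.app X.A) := by
          rw [Functor.map_comp, Category.assoc]
      _ = (T : A ⥤ A).map X.a ≫ (T : A ⥤ A).map ((G : A ⥤ A).map X.a) ≫
            E.lam.app ((G : A ⥤ A).obj X.A) ≫ (G : A ⥤ A).map (E.lam.app X.A) := by
          rw [X.coassoc, Functor.map_comp, Category.assoc]
      _ = (T : A ⥤ A).map X.a ≫ E.lam.app X.A ≫
            (G : A ⥤ A).map ((T : A ⥤ A).map X.a) ≫ (G : A ⥤ A).map (E.lam.app X.A) := by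
          rw [← Category.assoc ((T : A ⥤ A).map ((G : A ⥤ A).map X.a)), E.lam_natural X.a]
          simp only [Category.assoc]
      _ = ((T : A ⥤ A).map X.a ≫ E.lam.app X.A) ≫
            (G : A ⥤ A).map ((T : A ⥤ A).map X.a ≫ E.lam.app X.A) := by
          rw [Functor.map_comp]
          simp only [Category.assoc]


/-- The lifting of the endofunctor `T` to `A^G`. -/
@[simps]
def liftFunctorT : G.Coalgebra ⥤ G.Coalgebra where
  obj X := E.liftCoalgebra X
  map {X Y} f :=
    { f := (T : A ⥤ A).map f.f
      h := by
        calc ((T : A ⥤ A).map X.a ≫ E.lam.app X.A) ≫ (G : A ⥤ A).map ((T : A ⥤ A).map f.f)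
            = (T : A ⥤ A).map X.a ≫ E.lam.app X.A ≫
                (G : A ⥤ A).map ((T : A ⥤ A).map f.f) := by rw [Category.assoc]
          _ = (T : A ⥤ A).map X.a ≫ (T : A ⥤ A).map ((G : A ⥤ A).map f.f) ≫
                E.lam.app Y.A := by rw [← E.lam_natural f.f]
          _ = (T : A ⥤ A).map (X.a ≫ (G : A ⥤ A).map f.f) ≫ E.lam.app Y.A := by
              rw [Functor.map_comp, Category.assoc]
          _ = (T : A ⥤ A).map (f.f ≫ Y.a) ≫ E.lam.app Y.A := by rw [f.h]
          _ = (T : A ⥤ A).map f.f ≫ (T : A ⥤ A).map Y.a ≫ E.lam.app Y.A := by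
              rw [Functor.map_comp, Category.assoc] }
  map_id X := by ext; exact (T : A ⥤ A).map_id X.A
  map_comp f g := by ext; exact (T : A ⥤ A).map_comp f.f g.f

/-- The unit of the lifted monad. -/
@[simps]
def liftEta : 𝟭 (G.Coalgebra) ⟶ E.liftFunctorT where
  app X :=
    { f := T.η.app X.A
      h := by
        dsimp
        show X.a ≫ (G : A ⥤ A).map (T.η.app X.A) = T.η.app X.A ≫ (T : A ⥤ A).map X.a ≫ E.lam.app X.A
        have hnat : X.a ≫ T.η.app ((G : A ⥤ A).obj X.A) =
            T.η.app X.A ≫ (T : A ⥤ A).map X.a := by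
          simpa using T.η.naturality X.a
        rw [← Category.assoc, ← hnat, Category.assoc, E.comp_unit] }
  naturality X Y f := by
    ext
    show f.f ≫ T.η.app Y.A = T.η.app X.A ≫ (T : A ⥤ A).map f.f
    simpa using T.η.naturality f.f

/-- The multiplication of the lifted monad. -/
@[simps]
def liftMu : E.liftFunctorT ⋙ E.liftFunctorT ⟶ E.liftFunctorT where
  app X :=
    { f := T.μ.app X.A
      h := by
        dsimp
        have hnat : (T : A ⥤ A).map ((T : A ⥤ A).map X.a) ≫
              T.μ.app ((G : A ⥤ A).obj X.A) = T.μ.app X.A ≫ (T : A ⥤ A).map X.a := by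
          simpa using T.μ.naturality X.a
        calc ((T : A ⥤ A).map ((T : A ⥤ A).map X.a ≫ E.lam.app X.A) ≫
                E.lam.app ((T : A ⥤ A).obj X.A)) ≫ (G : A ⥤ A).map (T.μ.app X.A)
            = (T : A ⥤ A).map ((T : A ⥤ A).map X.a) ≫
                ((T : A ⥤ A).map (E.lam.app X.A) ≫ E.lam.app ((T : A ⥤ A).obj X.A) ≫
                  (G : A ⥤ A).map (T.μ.app X.A)) := by
              rw [Functor.map_comp]
              simp only [Category.assoc]
          _ = (T : A ⥤ A).map ((T : A ⥤ A).map X.a) ≫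
                T.μ.app ((G : A ⥤ A).obj X.A) ≫ E.lam.app X.A := by
              rw [← E.comp_mul]
          _ = (T.μ.app X.A ≫ (T : A ⥤ A).map X.a) ≫ E.lam.app X.A := by
              rw [← Category.assoc, hnat]
          _ = T.μ.app X.A ≫ (T : A ⥤ A).map X.a ≫ E.lam.app X.A := by
              rw [Category.assoc] }
  naturality X Y f := by
    ext
    show (T : A ⥤ A).map ((T : A ⥤ A).map f.f) ≫ T.μ.app Y.A =
      T.μ.app X.A ≫ (T : A ⥤ A).map f.f
    simpa using T.μ.naturality f.f

/-- The lifting `T̂` of the monad `T` to the Eilenberg–Moore category `A^G`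
along the entwining `λ`. -/
def liftedMonad : Monad (G.Coalgebra) where
  toFunctor := E.liftFunctorT
  η := E.liftEta
  μ := E.liftMu
  assoc X := by ext; exact T.assoc X.A
  left_unit X := by ext; exact T.left_unit X.A
  right_unit X := by ext; exact T.right_unit X.A


end Entwining


namespace Entwining

variable {A : Type*} [Category A] {F : Monad A} {G : Comonad A} (E : Entwining F G)

/-- The canonical natural transformation assembling the structure morphisms of
coalgebras over a comonad. -/
@[simps]
def coalgStructNat {C : Type*} [Category C] (H : Comonad C) :
    H.forget ⟶ H.forget ⋙ (H : C ⥤ C) where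
  app X := X.a
  naturality X Y f := by exact f.h.symm

/-- The left `Ĝ`-comodule structure `β_{K'} : φ_F ⟶ Ĝφ_F` on the free functor `φ_F`
corresponding to a functor `K' : A ⥤ (A_F)^{Ĝ}` with `U^{Ĝ} ∘ K' = φ_F`. -/
def structOfK (K' : A ⥤ E.liftedComonad.Coalgebra)
    (hK' : K' ⋙ Comonad.forget E.liftedComonad = F.free) :
    F.free ⟶ F.free ⋙ (E.liftedComonad : F.Algebra ⥤ F.Algebra) :=
  eqToHom hK'.symm ≫ Functor.whiskerLeft K' (coalgStructNat E.liftedComonad) ≫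
    Functor.whiskerRight (eqToHom hK') (E.liftedComonad : F.Algebra ⥤ F.Algebra)

/-- The underlying left `G`-comodule structure `β = U_F(β_{K'}) : F ⟶ GF` on the
functor `F` induced by a functor `K'` as above. -/
def inducedComod (K' : A ⥤ E.liftedComonad.Coalgebra)
    (hK' : K' ⋙ Comonad.forget E.liftedComonad = F.free) :
    (F : A ⥤ A) ⟶ (F : A ⥤ A) ⋙ (G : A ⥤ A) :=
  Functor.whiskerRight (E.structOfK K' hK') F.forget

/-- The conditions on `β : F ⟶ GF` appearing in Proposition 2.2: `β` is a left
`G`-comodule structure on `F` and the diagram `β ∘ m = Gm ∘ λF ∘ Fβ` commutes. -/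
def ComodLaws (β : (F : A ⥤ A) ⟶ (F : A ⥤ A) ⋙ (G : A ⥤ A)) : Prop :=
  (∀ a : A, β.app a ≫ G.ε.app ((F : A ⥤ A).obj a) = 𝟙 ((F : A ⥤ A).obj a)) ∧
  (∀ a : A, β.app a ≫ G.δ.app ((F : A ⥤ A).obj a) =
    β.app a ≫ (G : A ⥤ A).map (β.app a)) ∧
  (∀ a : A, F.μ.app a ≫ β.app a =
    (F : A ⥤ A).map (β.app a) ≫ E.lam.app ((F : A ⥤ A).obj a) ≫
      (G : A ⥤ A).map (F.μ.app a))

end Entwining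

section CoalgebraLifts

variable {C D : Type*} [Category C] [Category D] {H : Comonad C} {P : D ⥤ C}

def IsCoalgStruct (γ : P ⟶ P ⋙ (H : C ⥤ C)) : Prop :=
  (∀ a, γ.app a ≫ H.ε.app (P.obj a) = 𝟙 (P.obj a)) ∧
    ∀ a, γ.app a ≫ H.δ.app (P.obj a) = γ.app a ≫ (H : C ⥤ C).map (γ.app a)

def liftOfCoalgStruct (γ : P ⟶ P ⋙ (H : C ⥤ C)) (hγ : IsCoalgStruct γ) :
    D ⥤ H.Coalgebra where
  obj a := { A := P.obj a, a := γ.app a, counit := hγ.1 a, coassoc := hγ.2 a }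
  map f := { f := P.map f, h := (γ.naturality f).symm }

def coalgStructOfLift (K : D ⥤ H.Coalgebra) (h : K ⋙ H.forget = P) :
    P ⟶ P ⋙ (H : C ⥤ C) :=
  eqToHom h.symm ≫ Functor.whiskerLeft K (Entwining.coalgStructNat H) ≫
    Functor.whiskerRight (eqToHom h) (H : C ⥤ C)

lemma coalgStructOfLift_app (K : D ⥤ H.Coalgebra) (a : D) :
    (coalgStructOfLift K rfl).app a = (K.obj a).a := by
  simp only [coalgStructOfLift, eqToHom_refl, Functor.whiskerRight_id', Category.id_comp,
    NatTrans.comp_app, Functor.whiskerLeft_app, Entwining.coalgStructNat_app, NatTrans.id_app]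
  exact Category.comp_id (K.obj a).a

lemma isCoalgStruct_coalgStructOfLift (K : D ⥤ H.Coalgebra) (h : K ⋙ H.forget = P) :
    IsCoalgStruct (coalgStructOfLift K h) := by
  subst h
  simp only [IsCoalgStruct, coalgStructOfLift_app]
  exact ⟨fun a => (K.obj a).counit, fun a => (K.obj a).coassoc⟩

lemma coalgStructOfLift_liftOfCoalgStruct (γ : P ⟶ P ⋙ (H : C ⥤ C)) (hγ : IsCoalgStruct γ)
    (h : liftOfCoalgStruct γ hγ ⋙ H.forget = P) :
    coalgStructOfLift (liftOfCoalgStruct γ hγ) h = γ := by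
  ext a
  exact coalgStructOfLift_app (liftOfCoalgStruct γ hγ) a

lemma coalgebra_ext {X Y : H.Coalgebra} (hA : X.A = Y.A)
    (ha : X.a ≫ eqToHom (congrArg (H : C ⥤ C).obj hA) = eqToHom hA ≫ Y.a) : X = Y := by
  obtain ⟨XA, Xa, _, _⟩ := X
  obtain ⟨YA, Ya, _, _⟩ := Y
  dsimp at hA
  subst hA
  simp only [eqToHom_refl, Category.comp_id, Category.id_comp] at ha
  subst ha
  rfl

lemma coalgebra_eqToHom_f {X Y : H.Coalgebra} (h : X = Y) :
    (eqToHom h).f = eqToHom (congrArg Comonad.Coalgebra.A h) := by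
  subst h
  rfl

lemma eq_liftOfCoalgStruct (K : D ⥤ H.Coalgebra) (h : K ⋙ H.forget = P) :
    K = liftOfCoalgStruct (coalgStructOfLift K h) (isCoalgStruct_coalgStructOfLift K h) := by
  subst h
  -- after `subst`, the transports `eqToHom` are identities only up to definitional unfolding
  refine CategoryTheory.Functor.ext (fun a => coalgebra_ext rfl ?_) (fun a b f => ?_)
  · show (K.obj a).a ≫ 𝟙 (H.obj (K.obj a).A) = 𝟙 (K.obj a).A ≫ (coalgStructOfLift K rfl).app a
    rw [coalgStructOfLift_app, Category.comp_id]
    exact (Category.id_comp _).symm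
  · ext
    simp only [Comonad.Coalgebra.comp_f, coalgebra_eqToHom_f]
    show (K.map f).f = 𝟙 _ ≫ (K.map f).f ≫ 𝟙 _
    simp

lemma coalgStructOfLift_injective {K₁ K₂ : D ⥤ H.Coalgebra} (h₁ : K₁ ⋙ H.forget = P)
    (h₂ : K₂ ⋙ H.forget = P) (he : coalgStructOfLift K₁ h₁ = coalgStructOfLift K₂ h₂) :
    K₁ = K₂ := by
  rw [eq_liftOfCoalgStruct K₁ h₁, eq_liftOfCoalgStruct K₂ h₂]
  congr 1

end CoalgebraLifts

namespace Entwining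

variable {A : Type*} [Category A] {F : Monad A} {G : Comonad A} (E : Entwining F G)

lemma inducedComod_eq_whiskerRight (K' : A ⥤ E.liftedComonad.Coalgebra)
    (hK' : K' ⋙ Comonad.forget E.liftedComonad = F.free) :
    E.inducedComod K' hK' = Functor.whiskerRight (coalgStructOfLift K' hK') F.forget :=
  rfl

lemma comodLaws_iff (β : (F : A ⥤ A) ⟶ (F : A ⥤ A) ⋙ (G : A ⥤ A)) :
    E.ComodLaws β ↔ IsCoalgStruct β ∧ ∀ a : A, F.μ.app a ≫ β.app a =
      (F : A ⥤ A).map (β.app a) ≫ E.lam.app ((F : A ⥤ A).obj a) ≫ (G : A ⥤ A).map (F.μ.app a) :=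
  and_assoc.symm

lemma isCoalgStruct_whiskerRight_forget_iff
    (γ : F.free ⟶ F.free ⋙ (E.liftedComonad : F.Algebra ⥤ F.Algebra)) :
    IsCoalgStruct (Functor.whiskerRight γ F.forget :
      (F : A ⥤ A) ⟶ (F : A ⥤ A) ⋙ (G : A ⥤ A)) ↔ IsCoalgStruct γ := by
  simp only [IsCoalgStruct, Monad.Algebra.Hom.ext'_iff, Monad.Algebra.comp_f, Monad.Algebra.id_f,
    liftedComonad_ε_app_f, liftedComonad_δ_app_f, liftedComonad_map_f]
  rfl

lemma mu_app_comp_app_f (γ : F.free ⟶ F.free ⋙ (E.liftedComonad : F.Algebra ⥤ F.Algebra))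
    (a : A) :
    F.μ.app a ≫ (γ.app a).f =
      (F : A ⥤ A).map (γ.app a).f ≫ E.lam.app ((F : A ⥤ A).obj a) ≫
        (G : A ⥤ A).map (F.μ.app a) :=
  (γ.app a).h.symm

def liftComodStruct (β : (F : A ⥤ A) ⟶ (F : A ⥤ A) ⋙ (G : A ⥤ A))
    (hβ : ∀ a : A, F.μ.app a ≫ β.app a =
      (F : A ⥤ A).map (β.app a) ≫ E.lam.app ((F : A ⥤ A).obj a) ≫ (G : A ⥤ A).map (F.μ.app a)) :
    F.free ⟶ F.free ⋙ (E.liftedComonad : F.Algebra ⥤ F.Algebra) where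
  app a := { f := β.app a, h := (hβ a).symm }
  naturality a b f := by
    ext
    exact β.naturality f

end Entwining

open Entwining in
/-- **Proposition 2.2.**  Let `λ : FG ⟶ GF` be an entwining from a monad `F` to a
comonad `G` on `A` and `Ĝ` the lifting of `G` to `A_F`.  The assignment
`K' ↦ U_F(β_{K'})` yields a bijection between functors `K' : A ⥤ (A_F)^{Ĝ}` with
`U^{Ĝ} ∘ K' = φ_F` and left `G`-comodule structures `β : F ⟶ GF` on the functor `F`
satisfying `β ∘ m = Gm ∘ λF ∘ Fβ`. -/
theorem statement7 {A : Type*} [Category A] (F : Monad A) (G : Comonad A)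
    (E : Entwining F G) :
    (∀ K : {K' : A ⥤ E.liftedComonad.Coalgebra //
        K' ⋙ Comonad.forget E.liftedComonad = F.free},
      E.ComodLaws (E.inducedComod K.1 K.2)) ∧
    Function.Injective
      (fun K : {K' : A ⥤ E.liftedComonad.Coalgebra //
          K' ⋙ Comonad.forget E.liftedComonad = F.free} =>
        E.inducedComod K.1 K.2) ∧
    (∀ β : (F : A ⥤ A) ⟶ (F : A ⥤ A) ⋙ (G : A ⥤ A), E.ComodLaws β →
      ∃ K : {K' : A ⥤ E.liftedComonad.Coalgebra //
          K' ⋙ Comonad.forget E.liftedComonad = F.free},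
        E.inducedComod K.1 K.2 = β) := by
  refine ⟨fun ⟨K, hK⟩ => ?_, fun ⟨K₁, hK₁⟩ ⟨K₂, hK₂⟩ he => ?_, fun β hβ => ?_⟩
  · rw [comodLaws_iff, inducedComod_eq_whiskerRight]
    exact ⟨(E.isCoalgStruct_whiskerRight_forget_iff _).2 (isCoalgStruct_coalgStructOfLift K hK),
      E.mu_app_comp_app_f _⟩
  · exact Subtype.ext (coalgStructOfLift_injective hK₁ hK₂
      (((Functor.whiskeringRight A _ A).obj F.forget).map_injective he))
  · obtain ⟨hcoalg, hmul⟩ := (E.comodLaws_iff β).1 hβ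
    have hγ : IsCoalgStruct (E.liftComodStruct β hmul) :=
      (E.isCoalgStruct_whiskerRight_forget_iff _).1 hcoalg
    refine ⟨⟨liftOfCoalgStruct _ hγ, rfl⟩, ?_⟩
    rw [inducedComod_eq_whiskerRight, coalgStructOfLift_liftOfCoalgStruct]
    rfl

end Paper
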